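/- Let m ≥ 1, n := 2m−1, and let J ⊆ A be the ideal generated by τ^m·x − 𝐟_(m−1), 𝐟_m, h·x, and h^(2m). Let Φ : A → S be the ring homomorphism determined by ε ↦ ξ·w₁, τ ↦ ξ², σ ↦ ζ², h ↦ ξ·w₂, x ↦ ζ·f̄ₙ (well defined since 2ξw₁ = 0 and ξ²ζ² = 1 in S). If p ∈ A lies in the ideal ⟨ε⟩ and Φ(p) lies in the ideal of S generated by f̄(n+1) and w₂·f̄ₙ, then p ∈ J. (Proposition 4.6(iv) for n = 2m−1: the reduction map is injective on the torsion ideal ⟨ε⟩ of A/J.) -/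

import Mathlib

/- Context: `A = ℤ[ε,τ,σ,h,x]/(2ε, τσ-1)` models `𝒜[h,x]` where
`𝒜 = ℤ[ε,τ,τ⁻¹]/(2ε)`, and for `m ≥ 0`,
`𝐟_m = ∑_{a+2b=m} C(a+b,b)·ε^(2a+1)·τ^b·h^(2b) ∈ A`. -/

noncomputable section
set_option maxHeartbeats 1000000
set_option synthInstance.maxHeartbeats 1000000

open MvPolynomial

abbrev Apre : Type := MvPolynomial (Fin 5) ℤ  -- ε, τ, σ, h, x

def AI : Ideal Apre := Ideal.span {2 * X 0, X 1 * X 2 - 1}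

abbrev A : Type := Apre ⧸ AI

def ε : A := Ideal.Quotient.mk AI (X 0)
def τ : A := Ideal.Quotient.mk AI (X 1)
def σ : A := Ideal.Quotient.mk AI (X 2)
def h : A := Ideal.Quotient.mk AI (X 3)
def x : A := Ideal.Quotient.mk AI (X 4)

def f (m : ℕ) : A :=
  ∑ b ∈ Finset.range (m / 2 + 1),
    (Nat.choose (m - b) b : A) * ε ^ (2 * (m - 2 * b) + 1) * τ ^ b * h ^ (2 * b)

/- `S = 𝔽₂[ξ,ζ,w₁,w₂]/(ξζ-1)` with `f̄` defined recursively. -/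

abbrev Spre : Type := MvPolynomial (Fin 4) (ZMod 2)  -- ξ, ζ, w₁, w₂

def SI : Ideal Spre := Ideal.span {X 0 * X 1 - 1}

abbrev S : Type := Spre ⧸ SI

def ξS : S := Ideal.Quotient.mk SI (X 0)
def ζS : S := Ideal.Quotient.mk SI (X 1)
def w₁ : S := Ideal.Quotient.mk SI (X 2)
def w₂ : S := Ideal.Quotient.mk SI (X 3)

def fbar : ℕ → S
  | 0 => 1
  | 1 => w₁
  | n + 2 => w₁ * fbar (n + 1) + w₂ * fbar n




abbrev P3 : Type := MvPolynomial (Fin 3) (ZMod 2)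
abbrev PZ : Type := MvPolynomial (Fin 3) ℤ

def fp : ℕ → P3
  | 0 => 1
  | 1 => X 1
  | n + 2 => X 1 * fp (n+1) + X 2 * fp n

def trm (k b : ℕ) : PZ :=
  C (Nat.choose (k - b) b : ℤ) * X 0 ^ (2*(k - 2*b)+1) * X 1 ^ b * X 2 ^ (2*b)

def FZ (k : ℕ) : PZ := ∑ b ∈ Finset.range (k/2+1), trm k b

def GZ (k : ℕ) : PZ := ∑ b ∈ Finset.range (k/2+1),
  C (Nat.choose (k - b) b : ℤ) * X 0 ^ (2*(k - 2*b)) * X 1 ^ b * X 2 ^ (2*b)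

lemma X0_mul_GZ (k : ℕ) : X 0 * GZ k = FZ k := by
  unfold FZ GZ trm
  rw [Finset.mul_sum]
  refine Finset.sum_congr rfl fun b _ => ?_
  ring

lemma trm_eq_zero {k b : ℕ} (h : k < 2*b) : trm k b = 0 := by
  unfold trm
  rw [Nat.choose_eq_zero_of_lt (by omega)]
  simp

lemma FZ_ext (k K : ℕ) (hK : k/2+1 ≤ K) : ∑ b ∈ Finset.range K, trm k b = FZ k := by
  refine (Finset.sum_subset (Finset.range_subset_range.2 hK) fun b hb hbn => ?_).symm
  exact trm_eq_zero (by simp only [Finset.mem_range] at hb hbn; omega)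

lemma trm_step (k b : ℕ) :
    trm (k+2) (b+1) = X 0^2 * trm (k+1) (b+1) + X 1 * X 2^2 * trm k b := by
  rcases Nat.lt_trichotomy (2*b) k with hA | hB | hC
  · -- k ≥ 2b+1
    unfold trm
    have e0 : k + 2 - (b+1) = (k - b) + 1 := by omega
    have e1 : 2*((k+2) - 2*(b+1))+1 = 2*(k - 2*b)+1 := by omega
    have e2 : k + 1 - (b+1) = k - b := by omega
    have e3 : 2*((k+1) - 2*(b+1))+1 = 2*(k-2*b) - 1 := by omega
    rw [e0, e1, e2, e3, Nat.choose_succ_succ]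
    push_cast
    rw [C_add]
    have hx : (X 0 : PZ)^2 * (C ((k-b).choose (b+1) : ℤ) * X 0 ^ (2*(k-2*b)-1) * X 1 ^ (b+1) * X 2 ^ (2*(b+1)))
        = C ((k-b).choose (b+1) : ℤ) * X 0 ^ (2*(k-2*b)+1) * X 1 ^ (b+1) * X 2 ^ (2*(b+1)) := by
      have : (X 0 : PZ)^2 * X 0 ^ (2*(k-2*b)-1) = X 0 ^ (2*(k-2*b)+1) := by
        rw [← pow_add]; congr 1; omega
      calc (X 0 : PZ)^2 * (C ((k-b).choose (b+1) : ℤ) * X 0 ^ (2*(k-2*b)-1) * X 1 ^ (b+1) * X 2 ^ (2*(b+1)))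
          = C ((k-b).choose (b+1) : ℤ) * ((X 0 : PZ)^2 * X 0 ^ (2*(k-2*b)-1)) * X 1 ^ (b+1) * X 2 ^ (2*(b+1)) := by ring
        _ = _ := by rw [this]
    rw [hx]
    ring
  · -- k = 2b
    unfold trm
    have e0 : k + 2 - (b+1) = b + 1 := by omega
    have e1 : k - b = b := by omega
    have e2 : k + 1 - (b + 1) = b := by omega
    rw [e0, e1, e2, Nat.choose_self, Nat.choose_succ_self, Nat.choose_self]
    have e3 : 2*((k+2) - 2*(b+1))+1 = 1 := by omega
    have e4 : 2*(k - 2*b)+1 = 1 := by omega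
    rw [e3, e4]
    push_cast
    simp
    ring
  · -- k < 2b
    rw [trm_eq_zero (k := k+2) (by omega), trm_eq_zero (k := k+1) (by omega),
      trm_eq_zero (k := k) (by omega)]
    simp

lemma trm_zero_step (k : ℕ) : trm (k+2) 0 = X 0^2 * trm (k+1) 0 := by
  unfold trm
  simp only [Nat.sub_zero, Nat.choose_zero_right, Nat.mul_zero, pow_zero]
  push_cast
  have : 2*(k+2)+1 = (2*(k+1)+1) + 2 := by omega
  rw [this, pow_add]
  ring

lemma FZ_rec (k : ℕ) : FZ (k+2) = X 0^2 * FZ (k+1) + X 1 * X 2^2 * FZ k := by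
  have h1 : FZ (k+2) = ∑ b ∈ Finset.range (k/2+2), trm (k+2) b := by
    rw [FZ_ext (k+2) (k/2+2) (by omega)]
  rw [h1, Finset.sum_range_succ']
  have h2 : ∀ b ∈ Finset.range (k/2+1),
      trm (k+2) (b+1) = X 0^2 * trm (k+1) (b+1) + X 1 * X 2^2 * trm k b :=
    fun b _ => trm_step k b
  rw [Finset.sum_congr rfl h2, Finset.sum_add_distrib, trm_zero_step]
  have h3 : X 0^2 * FZ (k+1) = X 0^2 * (∑ b ∈ Finset.range (k/2+1), trm (k+1) (b+1) + trm (k+1) 0) := by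
    rw [← Finset.sum_range_succ', FZ_ext (k+1) (k/2+2) (by omega)]
  rw [h3, FZ, ← Finset.mul_sum, ← Finset.mul_sum]
  ring



lemma two_eq_zero : (2 : P3) = 0 := by
  have := CharP.cast_eq_zero P3 2
  exact_mod_cast this

lemma fp_rec (k : ℕ) : fp (k+2) = X 1 * fp (k+1) + X 2 * fp k := rfl

lemma fib_identities (k : ℕ) :
    fp (2*k+1) = X 1 * (fp k)^2 ∧ fp (2*k+2) = (fp (k+1))^2 + X 2 * (fp k)^2 := by
  induction k with
  | zero =>
    constructor
    · show fp 1 = _; simp [fp]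
    · show fp 2 = _
      rw [show fp 2 = X 1 * fp 1 + X 2 * fp 0 from fp_rec 0]
      simp only [show fp (0+1) = (X 1 : P3) from rfl, show fp 0 = (1:P3) from rfl,
        show fp 1 = (X 1 : P3) from rfl]
      ring
  | succ k ih =>
    obtain ⟨ih1, ih2⟩ := ih
    have h1 : fp (2*(k+1)+1) = X 1 * (fp (k+1))^2 := by
      have e : 2*(k+1)+1 = (2*k+1)+2 := by ring
      rw [e, fp_rec, show (2*k+1)+1 = 2*k+2 from rfl, ih1, ih2]
      linear_combination (X 1 * X 2 * (fp k)^2) * two_eq_zero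
    refine ⟨h1, ?_⟩
    have e : 2*(k+1)+2 = (2*k+2)+2 := by ring
    rw [e, fp_rec, show (2*k+2)+1 = 2*(k+1)+1 from rfl, h1, ih2]
    have sq : (fp (k+2))^2 = X 1^2 * (fp (k+1))^2 + X 2^2 * (fp k)^2 := by
      rw [fp_rec, CharTwo.add_sq, mul_pow, mul_pow]
    rw [sq]
    ring

lemma fpI1 (k : ℕ) : fp (2*k+1) = X 1 * (fp k)^2 := (fib_identities k).1
lemma fpI2 (k : ℕ) : fp (2*k+2) = (fp (k+1))^2 + X 2 * (fp k)^2 := (fib_identities k).2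

lemma cassini (k : ℕ) : fp (k+2) * fp k + (fp (k+1))^2 = X 2^(k+1) := by
  induction k with
  | zero =>
    show fp 2 * fp 0 + fp 1^2 = X 2^(0+1)
    rw [show fp 2 = X 1 * fp 1 + X 2 * fp 0 from fp_rec 0, show fp 1 = (X 1:P3) from rfl,
      show fp 0 = (1:P3) from rfl]
    linear_combination (X 1^2) * two_eq_zero
  | succ k ih =>
    have e : fp (k+2) = X 1 * fp (k+1) + X 2 * fp k := fp_rec k
    rw [show fp (k+1+2) = X 1 * fp (k+2) + X 2 * fp (k+1) from fp_rec (k+1),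
      show fp (k+1+1) = fp (k+2) from rfl]
    linear_combination X 2 * ih + fp (k+2) * e + (X 1 * fp (k+2) * fp (k+1)) * two_eq_zero

def psi : P3 →+* P3 := eval₂Hom C ![X 0 * X 1, X 0^2, X 0 * X 2]
def chi3 : PZ →+* P3 := MvPolynomial.map (Int.castRingHom (ZMod 2))

lemma psi_X0 : psi (X 0) = X 0 * X 1 := by simp [psi]
lemma psi_X1 : psi (X 1) = X 0^2 := by simp [psi]
lemma psi_X2 : psi (X 2) = X 0 * X 2 := by simp [psi]
lemma chi3_X (i : Fin 3) : chi3 (X i) = X i := by simp [chi3]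

lemma qval : ∀ k, psi (chi3 (FZ k)) = X 0^(2*k+1) * X 1 * (fp k)^2 := by
  have key : ∀ k, (psi (chi3 (FZ k)) = X 0^(2*k+1) * X 1 * (fp k)^2 ∧
      psi (chi3 (FZ (k+1))) = X 0^(2*(k+1)+1) * X 1 * (fp (k+1))^2) := by
    intro k
    induction k with
    | zero =>
      constructor
      · have : FZ 0 = X 0 := by
          simp [FZ, trm, Finset.sum_range_one]
        rw [this, chi3_X, psi_X0]
        simp [fp]
      · have : FZ 1 = X 0^3 := by
          simp [FZ, trm, Finset.sum_range_one]
        rw [this, map_pow, map_pow, chi3_X, psi_X0]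
        show _ = X 0 ^ 3 * X 1 * (fp 1)^2
        simp [fp]; ring
    | succ k ih =>
      obtain ⟨ih1, ih2⟩ := ih
      refine ⟨ih2, ?_⟩
      have h := congrArg (fun p => psi (chi3 p)) (FZ_rec k)
      simp only [map_add, map_mul, map_pow, chi3_X, psi_X0, psi_X1, psi_X2] at h
      rw [ih1, ih2] at h
      have sq : (fp (k+2))^2 = X 1^2 * (fp (k+1))^2 + X 2^2 * (fp k)^2 := by
        rw [fp_rec, CharTwo.add_sq, mul_pow, mul_pow]
      rw [show k+1+1 = k+2 from rfl, h, sq]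
      ring
  exact fun k => (key k).1

lemma ghat_val (k : ℕ) : psi (chi3 (GZ k)) = X 0^(2*k) * (fp k)^2 := by
  have h := congrArg (fun p => psi (chi3 p)) (X0_mul_GZ k)
  simp only [map_mul, chi3_X, psi_X0] at h
  rw [qval] at h
  have hne : (X 0 * X 1 : P3) ≠ 0 := mul_ne_zero (X_ne_zero 0) (X_ne_zero 1)
  apply mul_left_cancel₀ hne
  rw [h]; ring

def ev1 : P3 →+* P3 := eval₂Hom C ![X 0, 0, X 2]

lemma ev1_fp : ∀ k, ev1 (fp (2*k)) = X 2^k ∧ ev1 (fp (2*k+1)) = 0 := by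
  intro k
  induction k with
  | zero => constructor <;> simp [fp, ev1]
  | succ k ih =>
    obtain ⟨ih1, ih2⟩ := ih
    constructor
    · rw [show 2*(k+1) = (2*k)+2 from by ring, fp_rec, show 2*k+1 = 2*k+1 from rfl]
      rw [map_add, map_mul, map_mul, show ev1 (X 1) = 0 from by simp [ev1],
        show ev1 (X 2) = X 2 from by simp [ev1], ih1]
      ring
    · rw [show 2*(k+1)+1 = (2*k+1)+2 from by ring, fp_rec,
        show (2*k+1)+1 = 2*(k+1) from by ring]
      rw [map_add, map_mul, map_mul, show ev1 (X 1) = 0 from by simp [ev1], ih2]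
      ring

lemma mono_prod {R : Type*} [CommSemiring R] (u : Fin 3 →₀ ℕ) (a : R) :
    (monomial u a : MvPolynomial (Fin 3) R) = C a * X 0^(u 0) * X 1^(u 1) * X 2^(u 2) := by
  rw [monomial_eq, Finsupp.prod_fintype _ _ (fun i => pow_zero _), Fin.prod_univ_three]
  ring

lemma sub_ev1_mem (p : P3) : p - ev1 p ∈ Ideal.span {(X 1 : P3)} := by
  induction p using MvPolynomial.induction_on' with
  | monomial u a =>
    rcases Nat.eq_zero_or_pos (u 1) with h | h
    · have : ev1 (monomial u a) = monomial u a := by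
        rw [mono_prod, map_mul, map_mul, map_mul, map_pow, map_pow, map_pow,
          show ev1 (C a) = C a from by simp [ev1],
          show ev1 (X 0) = X 0 from by simp [ev1],
          show ev1 (X 2) = X 2 from by simp [ev1],
          show ev1 (X 1) = 0 from by simp [ev1], h]
        simp
      rw [this]; simp
    · obtain ⟨n, hn⟩ : ∃ n, u 1 = n + 1 := ⟨u 1 - 1, by omega⟩
      have h1 : ev1 (monomial u a) = 0 := by
        rw [mono_prod, map_mul, map_mul, map_mul, map_pow, map_pow, map_pow,
          show ev1 (X 1) = 0 from by simp [ev1], hn, zero_pow (Nat.succ_ne_zero n)]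
        ring
      rw [h1, sub_zero, Ideal.mem_span_singleton', mono_prod, hn]
      exact ⟨C a * X 0^(u 0) * X 1^n * X 2^(u 2), by ring⟩
  | add p q hp hq =>
    have : p + q - ev1 (p + q) = (p - ev1 p) + (q - ev1 q) := by rw [map_add]; ring
    rw [this]
    exact Ideal.add_mem _ hp hq

lemma add_self (y : P3) : y + y = 0 := by
  rw [← two_mul, two_eq_zero, zero_mul]

lemma even_smul_zero (c : ℕ) (y : P3) : (c + c) • y = 0 := by
  rw [add_smul, add_self]

lemma odd_smul_id (c : ℕ) (y : P3) : (c + c + 1) • y = y := by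
  rw [add_smul, even_smul_zero, zero_add, one_smul]

def DD : Derivation (ZMod 2) P3 P3 := mkDerivation _ (fun i => X i)

lemma DD_X (i : Fin 3) : DD (X i) = X i := mkDerivation_X _ _ i

lemma DD_C (a : ZMod 2) : DD (C a) = 0 := by
  have : (C a : P3) = algebraMap (ZMod 2) P3 a := rfl
  rw [this, Derivation.map_algebraMap]

lemma DD_pow (l : Fin 3) (n : ℕ) : DD (X l ^ n) = n • X l ^ n := by
  cases n with
  | zero => simp
  | succ n =>
    rw [Derivation.leibniz_pow, DD_X, Nat.add_sub_cancel, smul_eq_mul, ← pow_succ]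

lemma D_prod (a : ZMod 2) (i j k : ℕ) :
    DD (C a * X 0^i * X 1^j * X 2^k) = (i+j+k) • (C a * X 0^i * X 1^j * X 2^k) := by
  rw [Derivation.leibniz, Derivation.leibniz, Derivation.leibniz, DD_C, DD_pow, DD_pow, DD_pow]
  simp only [smul_eq_mul, smul_smul, mul_zero, add_zero, nsmul_eq_mul]
  push_cast
  ring

lemma DD_sq (y : P3) : DD (y^2) = 0 := by
  rw [pow_two, Derivation.leibniz, smul_eq_mul]
  exact add_self _

lemma DD_psi (c : P3) : DD (psi c) = 0 := by
  induction c using MvPolynomial.induction_on with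
  | C a => rw [show psi (C a) = C a from by simp [psi], DD_C]
  | add p q hp hq => rw [map_add, map_add, hp, hq, add_zero]
  | mul_X p i hp =>
    have hXi : DD (psi (X i)) = 0 := by
      fin_cases i
      · show DD (psi (X 0)) = 0
        rw [psi_X0, Derivation.leibniz, DD_X, DD_X, smul_eq_mul, smul_eq_mul]
        rw [show (X 0 : P3) * X 1 + X 1 * X 0 = X 0 * X 1 + X 0 * X 1 from by ring]
        exact add_self _
      · show DD (psi (X 1)) = 0
        rw [psi_X1, DD_pow, two_smul]
        exact add_self _
      · show DD (psi (X 2)) = 0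
        rw [psi_X2, Derivation.leibniz, DD_X, DD_X, smul_eq_mul, smul_eq_mul]
        rw [show (X 0 : P3) * X 2 + X 2 * X 0 = X 0 * X 2 + X 0 * X 2 from by ring]
        exact add_self _
    rw [map_mul, Derivation.leibniz, hp, smul_zero, add_zero, hXi, smul_zero]

lemma psi_C (a : ZMod 2) : psi (C a) = C a := by simp [psi]

lemma psi_pow_X1 (L : ℕ) (u : P3) : psi (X 1 ^ L * u) = X 0^(2*L) * psi u := by
  rw [map_mul, map_pow, psi_X1, ← pow_mul]

lemma EL1 (p : P3) : ∃ (L : ℕ) (u : P3), X 0^(2*L) * (p + DD p) = psi u := by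
  induction p using MvPolynomial.induction_on' with
  | monomial w a =>
    rw [mono_prod]
    set i := w 0; set j := w 1; set k := w 2
    rw [D_prod]
    rcases Nat.even_or_odd (i+j+k) with ⟨c, hc⟩ | ⟨c, hc⟩
    · rw [hc, even_smul_zero, add_zero]
      refine ⟨j+k, C a * X 0^j * X 1^c * X 2^k, ?_⟩
      rw [map_mul, map_mul, map_mul, map_pow, map_pow, map_pow, psi_X0, psi_X1, psi_X2, psi_C]
      rw [show (X 0:P3)^(2*(j+k)) * (C a * X 0^i * X 1^j * X 2^k)
          = C a * X 0^(2*(j+k)+i) * X 1^j * X 2^k from by rw [pow_add]; ring]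
      rw [show 2*(j+k)+i = j + 2*c + k from by omega]
      rw [pow_add, pow_add]
      ring
    · rw [hc, show 2*c+1 = c+c+1 from by ring, odd_smul_id, add_self]
      exact ⟨0, 0, by simp⟩
  | add p q hp hq =>
    obtain ⟨Lp, up, hup⟩ := hp
    obtain ⟨Lq, uq, huq⟩ := hq
    refine ⟨Lp + Lq, X 1^Lq * up + X 1^Lp * uq, ?_⟩
    simp only [map_add]
    rw [psi_pow_X1, psi_pow_X1, ← hup, ← huq]
    ring

lemma EL2 (p : P3) : ∃ (L : ℕ) (v : P3), X 0^(2*L+1) * DD p = psi v := by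
  induction p using MvPolynomial.induction_on' with
  | monomial w a =>
    rw [mono_prod]
    set i := w 0; set j := w 1; set k := w 2
    rw [D_prod]
    rcases Nat.even_or_odd (i+j+k) with ⟨c, hc⟩ | ⟨c, hc⟩
    · rw [hc, even_smul_zero]
      exact ⟨0, 0, by simp⟩
    · rw [hc, show 2*c+1 = c+c+1 from by ring, odd_smul_id]
      refine ⟨j+k, C a * X 0^j * X 1^(c+1) * X 2^k, ?_⟩
      rw [map_mul, map_mul, map_mul, map_pow, map_pow, map_pow, psi_X0, psi_X1, psi_X2, psi_C]
      rw [show (X 0:P3)^(2*(j+k)+1) * (C a * X 0^i * X 1^j * X 2^k)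
          = C a * X 0^(2*(j+k)+1+i) * X 1^j * X 2^k from by rw [pow_add]; ring]
      rw [show 2*(j+k)+1+i = j + 2*(c+1) + k from by omega]
      rw [pow_add, pow_add]
      ring
  | add p q hp hq =>
    obtain ⟨Lp, vp, hvp⟩ := hp
    obtain ⟨Lq, vq, hvq⟩ := hq
    refine ⟨Lp + Lq, X 1^Lq * vp + X 1^Lp * vq, ?_⟩
    simp only [map_add]
    rw [psi_pow_X1, psi_pow_X1, ← hvp, ← hvq]
    ring

def lam (u : Fin 3 →₀ ℕ) : Fin 3 →₀ ℕ :=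
  Finsupp.single 0 (u 0 + 2*(u 1) + u 2) + Finsupp.single 1 (u 0) + Finsupp.single 2 (u 2)

lemma lam_0 (u : Fin 3 →₀ ℕ) : lam u 0 = u 0 + 2*(u 1) + u 2 := by
  simp [lam, Finsupp.single_apply]
lemma lam_1 (u : Fin 3 →₀ ℕ) : lam u 1 = u 0 := by
  simp [lam, Finsupp.single_apply]
lemma lam_2 (u : Fin 3 →₀ ℕ) : lam u 2 = u 2 := by
  simp [lam, Finsupp.single_apply]

lemma lam_inj : Function.Injective lam := by
  intro u v huv
  have h0 := congrArg (fun f => f 0) huv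
  have h1 := congrArg (fun f => f 1) huv
  have h2 := congrArg (fun f => f 2) huv
  simp only [lam_0, lam_1, lam_2] at h0 h1 h2
  ext i
  fin_cases i
  · show u 0 = v 0
    omega
  · show u 1 = v 1
    omega
  · show u 2 = v 2
    omega

lemma psi_monomial (u : Fin 3 →₀ ℕ) (a : ZMod 2) :
    psi (monomial u a) = monomial (lam u) a := by
  rw [mono_prod, map_mul, map_mul, map_mul, map_pow, map_pow, map_pow,
    psi_X0, psi_X1, psi_X2, psi_C, mono_prod (lam u) a, lam_0, lam_1, lam_2]
  rw [show u 0 + 2*(u 1) + u 2 = u 0 + (2*(u 1) + u 2) from by ring, pow_add, pow_add, pow_mul]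
  ring

lemma coeff_psi (p : P3) (u : Fin 3 →₀ ℕ) : coeff (lam u) (psi p) = coeff u p := by
  conv_lhs => rw [p.as_sum, map_sum]
  rw [MvPolynomial.coeff_sum]
  simp only [psi_monomial, coeff_monomial]
  rw [Finset.sum_eq_single u]
  · simp
  · intro v hv hvu
    rw [if_neg (fun hl => hvu (lam_inj hl))]
  · intro hu
    simp [MvPolynomial.notMem_support_iff.1 hu]

lemma psi_inj : Function.Injective psi := by
  intro p q hpq
  ext u
  rw [← coeff_psi p u, ← coeff_psi q u, hpq]


lemma xizeta : ξS * ζS = 1 := by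
  rw [ξS, ζS, ← map_mul, ← map_one (Ideal.Quotient.mk SI), Ideal.Quotient.mk_eq_mk_iff_sub_mem]
  exact Ideal.subset_span rfl

def iota : P3 →+* S := (Ideal.Quotient.mk SI).comp (rename ![0,2,3]).toRingHom

lemma iota_X0 : iota (X 0) = ξS := by
  simp only [iota, RingHom.comp_apply, AlgHom.toRingHom_eq_coe, RingHom.coe_coe, rename_X]
  rfl
lemma iota_X1 : iota (X 1) = w₁ := by
  simp only [iota, RingHom.comp_apply, AlgHom.toRingHom_eq_coe, RingHom.coe_coe, rename_X]
  rfl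
lemma iota_X2 : iota (X 2) = w₂ := by
  simp only [iota, RingHom.comp_apply, AlgHom.toRingHom_eq_coe, RingHom.coe_coe, rename_X]
  rfl
lemma iota_C (a : ZMod 2) : iota (C a) = Ideal.Quotient.mk SI (C a) := by
  simp only [iota, RingHom.comp_apply, AlgHom.toRingHom_eq_coe, RingHom.coe_coe, rename_C]

abbrev KF : Type := FractionRing P3
def alg : P3 →+* KF := algebraMap P3 KF

lemma algX0_ne : alg (X 0) ≠ 0 := by
  have hinj : Function.Injective alg := IsFractionRing.injective P3 KF
  intro h
  exact X_ne_zero (R := ZMod 2) (σ := Fin 3) 0 (hinj (by rw [h, map_zero]))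

def evF : Spre →+* KF := eval₂Hom (alg.comp C) ![alg (X 0), (alg (X 0))⁻¹, alg (X 1), alg (X 2)]

lemma evF_kills : ∀ a ∈ SI, evF a = 0 := by
  have hle : SI ≤ RingHom.ker evF := by
    rw [SI, Ideal.span_le]
    intro g hg
    rcases Set.mem_singleton_iff.1 hg with rfl
    rw [SetLike.mem_coe, RingHom.mem_ker, map_sub, map_mul, map_one]
    rw [show evF (X 0) = alg (X 0) from by simp [evF], show evF (X 1) = (alg (X 0))⁻¹ from by simp [evF]]
    rw [mul_inv_cancel₀ algX0_ne, sub_self]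
  exact fun a ha => RingHom.mem_ker.1 (hle ha)

def evS : S →+* KF := Ideal.Quotient.lift SI evF evF_kills

lemma evS_iota (p : P3) : evS (iota p) = alg p := by
  have : evS.comp iota = alg := by
    apply MvPolynomial.ringHom_ext
    · intro r
      rw [RingHom.comp_apply, iota_C]
      show evF (C r) = alg (C r)
      simp [evF, alg]
    · intro i
      fin_cases i
      · show evS (iota (X 0)) = alg (X 0)
        rw [show iota (X 0) = Ideal.Quotient.mk SI (X 0) from iota_X0]
        show evF (X 0) = alg (X 0)
        simp [evF]
      · show evS (iota (X 1)) = alg (X 1)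
        rw [show iota (X 1) = Ideal.Quotient.mk SI (X 2) from iota_X1]
        show evF (X 2) = alg (X 1)
        simp [evF]
      · show evS (iota (X 2)) = alg (X 2)
        rw [show iota (X 2) = Ideal.Quotient.mk SI (X 3) from iota_X2]
        show evF (X 3) = alg (X 2)
        simp [evF]
  exact RingHom.congr_fun this p

lemma iota_inj : Function.Injective iota := by
  intro p q hpq
  have : alg p = alg q := by rw [← evS_iota, ← evS_iota, hpq]
  exact IsFractionRing.injective P3 KF this

lemma iota_X0pow (K : ℕ) (u : P3) : iota (X 0^K * u) = ξS^K * iota u := by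
  rw [map_mul, map_pow, iota_X0]

lemma scaleS (s : S) : ∃ (K : ℕ) (u : P3), ξS^K * s = iota u := by
  obtain ⟨Q, rfl⟩ := Ideal.Quotient.mk_surjective (I := SI) s
  induction Q using MvPolynomial.induction_on with
  | C a =>
    exact ⟨0, C a, by rw [pow_zero, one_mul, iota_C]⟩
  | add p q hp hq =>
    obtain ⟨Kp, up, hup⟩ := hp
    obtain ⟨Kq, uq, huq⟩ := hq
    refine ⟨Kp + Kq, X 0^Kq * up + X 0^Kp * uq, ?_⟩
    rw [map_add, show iota (X 0^Kq * up + X 0^Kp * uq) = iota (X 0^Kq * up) + iota (X 0^Kp * uq) from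
      map_add iota _ _, iota_X0pow, iota_X0pow, ← hup, ← huq, pow_add]
    ring
  | mul_X p i hp =>
    obtain ⟨K, u, hu⟩ := hp
    fin_cases i
    · refine ⟨K, u * X 0, ?_⟩
      show ξS ^ K * (Ideal.Quotient.mk SI p * ξS) = iota (u * X 0)
      rw [map_mul, iota_X0, ← hu]
      ring
    · refine ⟨K + 1, u, ?_⟩
      show ξS^(K+1) * (Ideal.Quotient.mk SI p * ζS) = iota u
      rw [pow_succ, ← hu]
      calc ξS ^ K * ξS * (Ideal.Quotient.mk SI p * ζS)
          = (ξS * ζS) * (ξS ^ K * Ideal.Quotient.mk SI p) := by ring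
        _ = ξS ^ K * Ideal.Quotient.mk SI p := by rw [xizeta, one_mul]
    · refine ⟨K, u * X 1, ?_⟩
      show ξS ^ K * (Ideal.Quotient.mk SI p * w₁) = iota (u * X 1)
      rw [map_mul, iota_X1, ← hu]
      ring
    · refine ⟨K, u * X 2, ?_⟩
      show ξS ^ K * (Ideal.Quotient.mk SI p * w₂) = iota (u * X 2)
      rw [map_mul, iota_X2, ← hu]
      ring

set_option synthInstance.maxHeartbeats 400000 in
lemma iota_fp : ∀ k, iota (fp k) = fbar k := by
  have key : ∀ k, iota (fp k) = fbar k ∧ iota (fp (k+1)) = fbar (k+1) := by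
    intro k
    induction k with
    | zero => exact ⟨by simp [fp, fbar], by simp [fp, fbar, iota_X1]⟩
    | succ k ih =>
      obtain ⟨ih1, ih2⟩ := ih
      refine ⟨ih2, ?_⟩
      show iota (fp (k+2)) = fbar (k+2)
      rw [show fp (k+2) = X 1 * fp (k+1) + X 2 * fp k from rfl,
        show fbar (k+2) = w₁ * fbar (k+1) + w₂ * fbar k from rfl]
      rw [map_add, map_mul, map_mul, iota_X1, iota_X2, ih1, ih2]
  exact fun k => (key k).1


def mkA : Apre →+* A := Ideal.Quotient.mk AI
def e3 : PZ →+* Apre := (rename ![0,1,3]).toRingHom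
def e4 : MvPolynomial (Fin 4) ℤ →+* Apre := (rename ![0,1,2,3]).toRingHom
def rn43 : PZ →+* MvPolynomial (Fin 4) ℤ := (rename ![0,1,3]).toRingHom

lemma tau_sigma : τ * σ = 1 := by
  rw [τ, σ, ← map_mul, ← map_one (Ideal.Quotient.mk AI), Ideal.Quotient.mk_eq_mk_iff_sub_mem]
  exact Ideal.subset_span (by simp)

lemma sigma_tau_pow (M : ℕ) : σ^M * τ^M = 1 := by
  rw [← mul_pow, mul_comm σ τ, tau_sigma, one_pow]

lemma two_eps : (2 : A) * ε = 0 := by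
  have : ((2 : Apre) * X 0 : Apre) ∈ AI := Ideal.subset_span (by simp)
  have h2 : mkA (2 * X 0) = 0 := Ideal.Quotient.eq_zero_iff_mem.2 this
  calc (2:A) * ε = mkA (2 * X 0) := by rw [map_mul, map_ofNat]; rfl
    _ = 0 := h2

lemma e3_X0 : e3 (X 0) = X 0 := by simp [e3]
lemma e3_X1 : e3 (X 1) = X 1 := by simp [e3]
lemma e3_X2 : e3 (X 2) = X 3 := by simp [e3]
lemma e4_X0 : e4 (X 0) = X 0 := by simp [e4]
lemma e4_X1 : e4 (X 1) = X 1 := by simp [e4]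
lemma e4_X2 : e4 (X 2) = X 2 := by simp [e4]
lemma e4_X3 : e4 (X 3) = X 3 := by simp [e4]
lemma mkA_X0 : mkA (X 0) = ε := rfl
lemma mkA_X1 : mkA (X 1) = τ := rfl
lemma mkA_X2 : mkA (X 2) = σ := rfl
lemma mkA_X3 : mkA (X 3) = h := rfl
lemma mkA_X4 : mkA (X 4) = x := rfl

lemma fz_eq (k : ℕ) : mkA (e3 (FZ k)) = f k := by
  rw [FZ, f, map_sum, map_sum]
  refine Finset.sum_congr rfl fun b _ => ?_
  rw [trm]
  simp only [map_mul, map_pow, e3_X0, e3_X1, e3_X2, mkA_X0, mkA_X1, mkA_X3]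
  rw [show (C ((Nat.choose (k-b) b : ℕ) : ℤ) : PZ) = ((Nat.choose (k-b) b : ℕ) : PZ) from
    map_natCast C _]
  rw [map_natCast e3, map_natCast mkA]

def sub4 (m' : ℕ) : Apre →+* MvPolynomial (Fin 4) ℤ :=
  eval₂Hom C ![X 0, X 1, X 2, X 3, X 2^(m'+1) * rn43 (FZ m')]

lemma e4_rn43 (p : PZ) : e4 (rn43 p) = e3 p := by
  show (rename ![0,1,2,3]) ((rename ![0,1,3]) p) = (rename ![0,1,3]) p
  rw [rename_rename]
  have : (![0,1,2,3] ∘ ![0,1,3] : Fin 3 → Fin 5) = ![0,1,3] := by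
    funext i
    fin_cases i <;> rfl
  rw [this]

def Jm (m' : ℕ) : Ideal A :=
  Ideal.span {τ ^ (m'+1) * x - f m', f (m'+1), h * x, h ^ (2 * (m'+1))}

lemma gen1_mem (m' : ℕ) : τ ^ (m'+1) * x - f m' ∈ Jm m' :=
  Ideal.subset_span (by simp)
lemma gen2_mem (m' : ℕ) : f (m'+1) ∈ Jm m' :=
  Ideal.subset_span (by simp)
lemma gen3_mem (m' : ℕ) : h * x ∈ Jm m' :=
  Ideal.subset_span (by simp)
lemma gen4_mem (m' : ℕ) : h ^ (2*(m'+1)) ∈ Jm m' :=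
  Ideal.subset_span (by simp)

lemma hf_mem (m' : ℕ) : h * f m' ∈ Jm m' := by
  have : h * f m' = τ^(m'+1) * (h * x) - h * (τ^(m'+1) * x - f m') := by ring
  rw [this]
  exact Ideal.sub_mem _ (Ideal.mul_mem_left _ _ (gen3_mem m')) (Ideal.mul_mem_left _ _ (gen1_mem m'))

lemma x_sub (m' : ℕ) : x - σ^(m'+1) * f m' = σ^(m'+1) * (τ^(m'+1) * x - f m') := by
  rw [mul_sub, ← mul_assoc, sigma_tau_pow, one_mul]

lemma sub4_X4_val (m' : ℕ) : mkA (e4 (sub4 m' (X 4))) = σ^(m'+1) * f m' := by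
  rw [show sub4 m' (X 4) = X 2^(m'+1) * rn43 (FZ m') from by simp [sub4], map_mul, map_mul,
    map_pow, map_pow, e4_rn43, fz_eq, e4_X2, mkA_X2]

lemma SUBC (m' : ℕ) (Q : Apre) : mkA Q - mkA (e4 (sub4 m' Q)) ∈ Jm m' := by
  induction Q using MvPolynomial.induction_on with
  | C a =>
    rw [show sub4 m' (C a) = C a from by simp [sub4], show e4 (C a : MvPolynomial (Fin 4) ℤ) = C a from by simp [e4]]
    rw [sub_self]
    exact Ideal.zero_mem _
  | add p q hp hq =>
    have : mkA (p + q) - mkA (e4 (sub4 m' (p+q)))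
        = (mkA p - mkA (e4 (sub4 m' p))) + (mkA q - mkA (e4 (sub4 m' q))) := by
      rw [map_add, map_add (sub4 m'), map_add e4, map_add]
      ring
    rw [this]
    exact Ideal.add_mem _ hp hq
  | mul_X p i hp =>
    have key : mkA (p * X i) - mkA (e4 (sub4 m' (p * X i)))
        = (mkA p - mkA (e4 (sub4 m' p))) * mkA (X i)
          + mkA (e4 (sub4 m' p)) * (mkA (X i) - mkA (e4 (sub4 m' (X i)))) := by
      rw [map_mul, map_mul (sub4 m'), map_mul e4, map_mul]
      ring
    rw [key]
    refine Ideal.add_mem _ (Ideal.mul_mem_right _ _ hp) ?_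
    refine Ideal.mul_mem_left _ _ ?_
    fin_cases i
    · show mkA (X 0) - mkA (e4 (sub4 m' (X 0))) ∈ Jm m'
      rw [show sub4 m' (X 0) = X 0 from by simp [sub4], e4_X0, sub_self]
      exact Ideal.zero_mem _
    · show mkA (X 1) - mkA (e4 (sub4 m' (X 1))) ∈ Jm m'
      rw [show sub4 m' (X 1) = X 1 from by simp [sub4], e4_X1, sub_self]
      exact Ideal.zero_mem _
    · show mkA (X 2) - mkA (e4 (sub4 m' (X 2))) ∈ Jm m'
      rw [show sub4 m' (X 2) = X 2 from by simp [sub4], e4_X2, sub_self]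
      exact Ideal.zero_mem _
    · show mkA (X 3) - mkA (e4 (sub4 m' (X 3))) ∈ Jm m'
      rw [show sub4 m' (X 3) = X 3 from by simp [sub4], e4_X3, sub_self]
      exact Ideal.zero_mem _
    · show mkA (X 4) - mkA (e4 (sub4 m' (X 4))) ∈ Jm m'
      rw [mkA_X4, sub4_X4_val, x_sub]
      exact Ideal.mul_mem_left _ _ (gen1_mem m')

lemma e3_X1pow (M : ℕ) (R : PZ) : mkA (e3 (X 1^M * R)) = τ^M * mkA (e3 R) := by
  rw [map_mul, map_pow, e3_X1, map_mul, map_pow]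
  rfl

lemma CLR (R4 : MvPolynomial (Fin 4) ℤ) :
    ∃ (M : ℕ) (R3 : PZ), τ^M * mkA (e4 R4) = mkA (e3 R3) := by
  induction R4 using MvPolynomial.induction_on with
  | C a =>
    refine ⟨0, C a, ?_⟩
    rw [pow_zero, one_mul, show e4 (C a : MvPolynomial (Fin 4) ℤ) = C a from by simp [e4],
      show e3 (C a : PZ) = C a from by simp [e3]]
  | add p q hp hq =>
    obtain ⟨Mp, Rp, hRp⟩ := hp
    obtain ⟨Mq, Rq, hRq⟩ := hq
    refine ⟨Mp + Mq, X 1^Mq * Rp + X 1^Mp * Rq, ?_⟩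
    rw [map_add, map_add, map_add e3, map_add, e3_X1pow, e3_X1pow, ← hRp, ← hRq, pow_add]
    ring
  | mul_X p i hp =>
    obtain ⟨M, R, hR⟩ := hp
    fin_cases i
    · refine ⟨M, R * X 0, ?_⟩
      show τ ^ M * (mkA (e4 (p * X 0))) = mkA (e3 (R * X 0))
      rw [map_mul e4, map_mul, map_mul e3, map_mul, e4_X0, e3_X0, ← hR]
      ring
    · refine ⟨M, R * X 1, ?_⟩
      show τ ^ M * (mkA (e4 (p * X 1))) = mkA (e3 (R * X 1))
      rw [map_mul e4, map_mul, map_mul e3, map_mul, e4_X1, e3_X1, ← hR]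
      ring
    · refine ⟨M + 1, R, ?_⟩
      show τ ^ (M+1) * (mkA (e4 (p * X 2))) = mkA (e3 R)
      rw [map_mul e4, map_mul, e4_X2, mkA_X2, pow_succ, ← hR]
      calc τ ^ M * τ * (mkA (e4 p) * σ) = (τ * σ) * (τ^M * mkA (e4 p)) := by ring
        _ = τ^M * mkA (e4 p) := by rw [tau_sigma, one_mul]
    · refine ⟨M, R * X 2, ?_⟩
      show τ ^ M * (mkA (e4 (p * X 3))) = mkA (e3 (R * X 2))
      rw [map_mul e4, map_mul, map_mul e3, map_mul, e4_X3, e3_X2, ← hR]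
      ring


def Tm (m' : ℕ) : Ideal S := Ideal.span {fbar (2*m'+2), w₂ * fbar (2*m'+1)}

lemma chi3_surj : Function.Surjective chi3 :=
  MvPolynomial.map_surjective _ ZMod.intCast_surjective

lemma fbar_odd (k : ℕ) : fbar (2*k+1) = w₁ * (fbar k)^2 := by
  rw [← iota_fp, fpI1, map_mul, map_pow, iota_X1, iota_fp]

lemma ev1_X0 : ev1 (X 0) = X 0 := by simp [ev1]
lemma ev1_X1 : ev1 (X 1) = 0 := by simp [ev1]
lemma ev1_X2 : ev1 (X 2) = X 2 := by simp [ev1]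
lemma ev1_fp_even' (k : ℕ) : ev1 (fp (2*k+2)) = X 2^(k+1) := by
  rw [show 2*k+2 = 2*(k+1) from by ring]
  exact (ev1_fp (k+1)).1
lemma ev1_fp_odd (k : ℕ) : ev1 (fp (2*k+1)) = 0 := (ev1_fp k).2

lemma eps_mul_GZ (k : ℕ) : ε * mkA (e3 (GZ k)) = f k := by
  have h1 : mkA (e3 (X 0 * GZ k)) = f k := by rw [X0_mul_GZ, fz_eq]
  rw [← h1, map_mul, map_mul, e3_X0, mkA_X0]

section PhiSec
variable (Φ : A →+* S) (m' : ℕ)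

lemma HomEq (hΦε : Φ ε = ξS * w₁) (hΦτ : Φ τ = ξS ^ 2) (hΦh : Φ h = ξS * w₂) (R3 : PZ) :
    Φ (mkA (e3 R3)) = iota (psi (chi3 R3)) := by
  have hcomp : Φ.comp (mkA.comp e3) = (iota.comp psi).comp chi3 := by
    apply MvPolynomial.ringHom_ext
    · intro r
      show Φ (mkA (e3 (C r))) = iota (psi (chi3 (C r)))
      rw [eq_intCast (C : ℤ →+* PZ) r, map_intCast, map_intCast, map_intCast, map_intCast,
        map_intCast, map_intCast]
    · intro i
      fin_cases i
      · show Φ (mkA (e3 (X 0))) = iota (psi (chi3 (X 0)))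
        rw [e3_X0, mkA_X0, hΦε, chi3_X, psi_X0, map_mul, iota_X0, iota_X1]
      · show Φ (mkA (e3 (X 1))) = iota (psi (chi3 (X 1)))
        rw [e3_X1, mkA_X1, hΦτ, chi3_X, psi_X1, map_pow, iota_X0]
      · show Φ (mkA (e3 (X 2))) = iota (psi (chi3 (X 2)))
        rw [e3_X2, mkA_X3, hΦh, chi3_X, psi_X2, map_mul, iota_X0, iota_X2]
  exact RingHom.congr_fun hcomp R3

lemma Phi_f (hΦε : Φ ε = ξS * w₁) (hΦτ : Φ τ = ξS ^ 2) (hΦh : Φ h = ξS * w₂) (k : ℕ) :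
    Φ (f k) = ξS^(2*k+1) * (w₁ * (fbar k)^2) := by
  rw [← fz_eq, HomEq Φ hΦε hΦτ hΦh, qval, map_mul, map_mul, map_pow, map_pow,
    iota_X0, iota_X1, iota_fp]
  ring

lemma PhiJ (hΦε : Φ ε = ξS * w₁) (hΦτ : Φ τ = ξS ^ 2) (hΦh : Φ h = ξS * w₂)
    (hΦx : Φ x = ζS * fbar (2 * m' + 1)) :
    ∀ j ∈ Jm m', Φ j ∈ Tm m' := by
  have hg1 : Φ (τ ^ (m'+1) * x - f m') = 0 := by
    rw [map_sub, map_mul, map_pow, hΦτ, hΦx, Phi_f Φ hΦε hΦτ hΦh, fbar_odd]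
    have h1 : (ξS^2)^(m'+1) * (ζS * (w₁ * (fbar m')^2)) = ξS^(2*m'+1) * (w₁ * (fbar m')^2) := by
      rw [← pow_mul]
      calc ξS^(2*(m'+1)) * (ζS * (w₁ * (fbar m')^2))
          = (ξS * ζS) * (ξS^(2*m'+1) * (w₁ * (fbar m')^2)) := by
            rw [show 2*(m'+1) = (2*m'+1)+1 from by ring, pow_succ]; ring
        _ = ξS^(2*m'+1) * (w₁ * (fbar m')^2) := by rw [xizeta, one_mul]
    rw [h1, sub_self]
  have hg2 : Φ (f (m'+1)) ∈ Tm m' := by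
    have hsq : (fp (m'+1))^2 = fp (2*m'+2) + X 2 * (fp m')^2 := by
      rw [fpI2]
      linear_combination (-(X 2 * (fp m')^2)) * two_eq_zero
    have hP3 : X 1 * (fp (m'+1))^2 = X 1 * fp (2*m'+2) + X 2 * fp (2*m'+1) := by
      rw [hsq, fpI1]; ring
    have hS : w₁ * (fbar (m'+1))^2 = w₁ * fbar (2*m'+2) + w₂ * fbar (2*m'+1) := by
      have := congrArg iota hP3
      simpa only [map_add, map_mul, map_pow, iota_X1, iota_X2, iota_fp] using this
    have : Φ (f (m'+1)) = (ξS^(2*(m'+1)+1) * w₁) * fbar (2*m'+2)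
        + (ξS^(2*(m'+1)+1)) * (w₂ * fbar (2*m'+1)) := by
      rw [Phi_f Φ hΦε hΦτ hΦh, hS]; ring
    rw [this]
    refine add_mem (Ideal.mul_mem_left _ _ ?_) (Ideal.mul_mem_left _ _ ?_)
    · exact Ideal.subset_span (by simp)
    · exact Ideal.subset_span (by simp)
  have hg3 : Φ (h * x) ∈ Tm m' := by
    have : Φ (h * x) = w₂ * fbar (2*m'+1) := by
      rw [map_mul, hΦh, hΦx]
      calc ξS * w₂ * (ζS * fbar (2*m'+1)) = (ξS * ζS) * (w₂ * fbar (2*m'+1)) := by ring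
        _ = w₂ * fbar (2*m'+1) := by rw [xizeta, one_mul]
    rw [this]
    exact Ideal.subset_span (by simp)
  have hg4 : Φ (h ^ (2*(m'+1))) ∈ Tm m' := by
    have hP3 : (X 2 : P3)^(2*(m'+1))
        = (X 2 * fp (2*m')) * fp (2*m'+2) + fp (2*m'+1) * (X 2 * fp (2*m'+1)) := by
      have hc := cassini (2*m')
      linear_combination (-(X 2 : P3)) * hc
    have hS : (w₂ : S)^(2*(m'+1))
        = (w₂ * fbar (2*m')) * fbar (2*m'+2) + fbar (2*m'+1) * (w₂ * fbar (2*m'+1)) := by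
      have := congrArg iota hP3
      simpa only [map_add, map_mul, map_pow, iota_X2, iota_fp] using this
    have : Φ (h ^ (2*(m'+1))) = (ξS^(2*(m'+1)) * (w₂ * fbar (2*m'))) * fbar (2*m'+2)
        + (ξS^(2*(m'+1)) * fbar (2*m'+1)) * (w₂ * fbar (2*m'+1)) := by
      rw [map_pow, hΦh, mul_pow, hS]; ring
    rw [this]
    refine add_mem (Ideal.mul_mem_left _ _ ?_) (Ideal.mul_mem_left _ _ ?_)
    · exact Ideal.subset_span (by simp)
    · exact Ideal.subset_span (by simp)
  intro j hj
  refine Submodule.span_induction ?_ ?_ ?_ ?_ hj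
  · intro y hy
    simp only [Set.mem_insert_iff, Set.mem_singleton_iff] at hy
    rcases hy with rfl | rfl | rfl | rfl
    · rw [hg1]; exact zero_mem _
    · exact hg2
    · exact hg3
    · exact hg4
  · rw [map_zero]; exact zero_mem _
  · intro a b _ _ ha hb
    rw [map_add]; exact add_mem ha hb
  · intro a b _ hb
    rw [smul_eq_mul, map_mul]
    exact Ideal.mul_mem_left _ _ hb

end PhiSec

/- Statement 14 (Proposition 4.6(iv), case `n = 2m-1`): with
`Φ : A → S` determined by `ε ↦ ξw₁`, `τ ↦ ξ²`, `σ ↦ ζ²`, `h ↦ ξw₂`,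
`x ↦ ζ·f̄ₙ`, if `p ∈ ⟨ε⟩` and `Φ p ∈ ⟨f̄(n+1), w₂·f̄ₙ⟩` then `p ∈ J`. -/
theorem reduction_injective_on_torsion_odd (m : ℕ) (hm : 1 ≤ m)
    (Φ : A →+* S)
    (hΦε : Φ ε = ξS * w₁) (hΦτ : Φ τ = ξS ^ 2) (hΦσ : Φ σ = ζS ^ 2)
    (hΦh : Φ h = ξS * w₂) (hΦx : Φ x = ζS * fbar (2 * m - 1))
    (p : A) (hp : p ∈ Ideal.span {ε})
    (hΦp : Φ p ∈ Ideal.span {fbar (2 * m - 1 + 1), w₂ * fbar (2 * m - 1)}) :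
    p ∈ Ideal.span {τ ^ m * x - f (m - 1), f m, h * x, h ^ (2 * m)} := by
  classical
  obtain ⟨m', rfl⟩ : ∃ m'', m = m'' + 1 := ⟨m - 1, by omega⟩
  have hidx : 2 * (m' + 1) - 1 = 2 * m' + 1 := by omega
  rw [hidx] at hΦx hΦp
  rw [show 2*m'+1+1 = 2*m'+2 from rfl] at hΦp
  have hΦpT : Φ p ∈ Tm m' := hΦp
  show p ∈ Jm m'
  -- p = mkA Q * ε
  obtain ⟨a0, ha0⟩ := Ideal.mem_span_singleton'.1 hp
  obtain ⟨Q, hQ⟩ := Ideal.Quotient.mk_surjective a0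
  have hQ' : mkA Q = a0 := hQ
  have hsub := SUBC m' Q
  have hPhiJ := PhiJ Φ m' hΦε hΦτ hΦh hΦx
  suffices hs : ε * mkA (e4 (sub4 m' Q)) ∈ Jm m' by
    have hpe : p = ε * mkA (e4 (sub4 m' Q)) + ε * (mkA Q - mkA (e4 (sub4 m' Q))) := by
      rw [← ha0, ← hQ']; ring
    rw [hpe]
    exact add_mem hs (Ideal.mul_mem_left _ _ hsub)
  have hT1 : Φ (ε * mkA (e4 (sub4 m' Q))) ∈ Tm m' := by
    have heq : Φ (ε * mkA (e4 (sub4 m' Q)))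
        = Φ p - Φ ε * Φ (mkA Q - mkA (e4 (sub4 m' Q))) := by
      rw [← ha0, ← hQ', map_mul, map_mul, map_sub]; ring
    rw [heq]
    exact sub_mem hΦpT (Ideal.mul_mem_left _ _ (hPhiJ _ hsub))
  obtain ⟨M, R3, hM⟩ := CLR (sub4 m' Q)
  suffices hs2 : ε * mkA (e3 R3) ∈ Jm m' by
    have : ε * mkA (e4 (sub4 m' Q)) = σ^M * (ε * mkA (e3 R3)) := by
      rw [← hM]
      calc ε * mkA (e4 (sub4 m' Q))
          = (σ^M * τ^M) * (ε * mkA (e4 (sub4 m' Q))) := by rw [sigma_tau_pow, one_mul]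
        _ = σ^M * (ε * (τ^M * mkA (e4 (sub4 m' Q)))) := by ring
    rw [this]
    exact Ideal.mul_mem_left _ _ hs2
  have hT2 : Φ (ε * mkA (e3 R3)) ∈ Tm m' := by
    have : ε * mkA (e3 R3) = τ^M * (ε * mkA (e4 (sub4 m' Q))) := by rw [← hM]; ring
    rw [this, map_mul]
    exact Ideal.mul_mem_left _ _ hT1
  set c3 : P3 := chi3 R3 with hc3def
  have hc3 : Φ (ε * mkA (e3 R3)) = ξS * w₁ * iota (psi c3) := by
    rw [map_mul, hΦε, HomEq Φ hΦε hΦτ hΦh R3]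
  rw [hc3] at hT2
  obtain ⟨u0, v0, huv⟩ := Ideal.mem_span_pair.1 hT2
  obtain ⟨K1, u1p, hu1⟩ := scaleS u0
  obtain ⟨K2, v1p, hv1⟩ := scaleS v0
  have E1 : X 0^(K1+K2+1) * (X 1 * psi c3)
      = (X 0^K2 * u1p) * fp (2*m'+2) + (X 0^K1 * v1p) * (X 2 * fp (2*m'+1)) := by
    apply iota_inj
    simp only [map_add, map_mul, map_pow, iota_X0, iota_X1, iota_X2, iota_fp]
    rw [← hu1, ← hv1]
    calc ξS^(K1+K2+1) * (w₁ * iota (psi c3))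
        = ξS^(K1+K2) * (ξS * w₁ * iota (psi c3)) := by rw [pow_succ]; ring
      _ = ξS^(K1+K2) * (u0 * fbar (2*m'+2) + v0 * (w₂ * fbar (2*m'+1))) := by rw [huv]
      _ = ξS^K2 * (ξS^K1 * u0) * fbar (2*m'+2)
          + ξS^K1 * (ξS^K2 * v0) * (w₂ * fbar (2*m'+1)) := by rw [pow_add]; ring
  have hev : (X 0^K2 * ev1 u1p) * X 2^(m'+1) = 0 := by
    have h5 := congrArg ev1 E1
    simp only [map_add, map_mul, map_pow, ev1_X0, ev1_X1, ev1_X2, ev1_fp_even' m',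
      ev1_fp_odd m', zero_mul, mul_zero, add_zero, zero_add] at h5
    linear_combination -h5
  have hu1z : ev1 (X 0^K2 * u1p) = 0 := by
    rw [map_mul, map_pow, ev1_X0]
    rcases mul_eq_zero.1 hev with hcase | hcase
    · exact hcase
    · exact absurd hcase (pow_ne_zero _ (X_ne_zero 2))
  have hu1span : X 0^K2 * u1p ∈ Ideal.span {(X 1 : P3)} := by
    have := sub_ev1_mem (X 0^K2 * u1p)
    rwa [hu1z, sub_zero] at this
  obtain ⟨r, hr⟩ := Ideal.mem_span_singleton'.1 hu1span
  have E2 : X 0^(K1+K2+1) * psi c3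
      = r * fp (2*m'+2) + (X 0^K1 * v1p) * (X 2 * (fp m')^2) := by
    apply mul_left_cancel₀ (X_ne_zero (R := ZMod 2) (σ := Fin 3) 1)
    calc X 1 * (X 0^(K1+K2+1) * psi c3) = X 0^(K1+K2+1) * (X 1 * psi c3) := by ring
      _ = (X 0^K2 * u1p) * fp (2*m'+2) + (X 0^K1 * v1p) * (X 2 * fp (2*m'+1)) := E1
      _ = X 1 * (r * fp (2*m'+2) + (X 0^K1 * v1p) * (X 2 * (fp m')^2)) := by
          rw [← hr, fpI1]; ring
  have E3pre : X 0^(2*(K1+K2+1)) * psi c3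
      = (X 0^(K1+K2+1) * r) * (fp (m'+1))^2
        + (X 0^(K1+K2+1) * (r + X 0^K1 * v1p)) * (X 2 * (fp m')^2) := by
    have hI2 : fp (2*m'+2) = (fp (m'+1))^2 + X 2 * (fp m')^2 := fpI2 m'
    calc X 0^(2*(K1+K2+1)) * psi c3
        = X 0^(K1+K2+1) * (X 0^(K1+K2+1) * psi c3) := by
          rw [show 2*(K1+K2+1) = (K1+K2+1)+(K1+K2+1) from by ring, pow_add]; ring
      _ = X 0^(K1+K2+1) * (r * fp (2*m'+2) + (X 0^K1 * v1p) * (X 2 * (fp m')^2)) := by rw [E2]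
      _ = _ := by rw [hI2]; ring
  have hDD1 : DD ((X 0^(K1+K2+1) * r) * (fp (m'+1))^2)
      = (fp (m'+1))^2 * DD (X 0^(K1+K2+1) * r) := by
    rw [Derivation.leibniz, DD_sq, smul_zero, zero_add, smul_eq_mul]
  have hgg : DD (X 2 * (fp m')^2) = X 2 * (fp m')^2 := by
    rw [Derivation.leibniz, DD_sq, DD_X, smul_zero, zero_add, smul_eq_mul]
    ring
  have hDD2 : DD ((X 0^(K1+K2+1) * (r + X 0^K1 * v1p)) * (X 2 * (fp m')^2))
      = (X 0^(K1+K2+1) * (r + X 0^K1 * v1p)) * (X 2 * (fp m')^2)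
        + (X 2 * (fp m')^2) * DD (X 0^(K1+K2+1) * (r + X 0^K1 * v1p)) := by
    rw [Derivation.leibniz, hgg, smul_eq_mul, smul_eq_mul]
  have hDD0 : DD (X 0^(2*(K1+K2+1)) * psi c3) = 0 := by
    rw [Derivation.leibniz, DD_psi, smul_zero, zero_add, DD_pow,
      show 2*(K1+K2+1) = (K1+K2+1)+(K1+K2+1) from by ring, even_smul_zero, smul_zero]
  have hzero : (0:P3) = (fp (m'+1))^2 * DD (X 0^(K1+K2+1) * r)
      + ((X 0^(K1+K2+1) * (r + X 0^K1 * v1p)) * (X 2 * (fp m')^2)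
        + (X 2 * (fp m')^2) * DD (X 0^(K1+K2+1) * (r + X 0^K1 * v1p))) := by
    have h6 : DD (X 0^(2*(K1+K2+1)) * psi c3)
        = DD ((X 0^(K1+K2+1) * r) * (fp (m'+1))^2
          + (X 0^(K1+K2+1) * (r + X 0^K1 * v1p)) * (X 2 * (fp m')^2)) := by rw [E3pre]
    rw [map_add, hDD0, hDD1, hDD2] at h6
    exact h6
  have E3 : X 0^(2*(K1+K2+1)) * psi c3
      = (X 0^(K1+K2+1) * r + DD (X 0^(K1+K2+1) * r)) * (fp (m'+1))^2
        + DD (X 0^(K1+K2+1) * (r + X 0^K1 * v1p)) * (X 2 * (fp m')^2) := by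
    linear_combination E3pre + hzero
      + ((X 0^(K1+K2+1) * (r + X 0^K1 * v1p)) * (X 2 * (fp m')^2)) * two_eq_zero
  obtain ⟨La, ua, hua⟩ := EL1 (X 0^(K1+K2+1) * r)
  obtain ⟨Lb, vb, hvb⟩ := EL2 (X 0^(K1+K2+1) * (r + X 0^K1 * v1p))
  have key3 : psi (X 1^(K1+K2+1+La+Lb+(m'+1)) * c3)
      = psi (ua * X 1^Lb * chi3 (GZ (m'+1)) + vb * X 1^La * (X 2 * chi3 (GZ m'))) := by
    rw [psi_pow_X1]
    simp only [map_add, map_mul, map_pow, psi_X1, psi_X2]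
    rw [ghat_val, ghat_val, ← hua, ← hvb]
    rw [show 2*(K1+K2+1+La+Lb+(m'+1)) = 2*(La+Lb+(m'+1)) + 2*(K1+K2+1) from by ring,
      pow_add, mul_assoc, E3]
    ring
  have key4 := psi_inj key3
  obtain ⟨U, hU⟩ := chi3_surj (ua * X 1^Lb)
  obtain ⟨V, hV⟩ := chi3_surj (vb * X 1^La)
  have hWzero : chi3 (X 1^(K1+K2+1+La+Lb+(m'+1)) * R3 - U * GZ (m'+1) - V * (X 2 * GZ m')) = 0 := by
    rw [map_sub, map_sub]
    simp only [map_mul, map_pow, chi3_X]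
    rw [hU, hV, ← hc3def, key4]
    ring
  have hWmem : (X 1^(K1+K2+1+La+Lb+(m'+1)) * R3 - U * GZ (m'+1) - V * (X 2 * GZ m'))
      ∈ Ideal.span {(C 2 : PZ)} := by
    have h7 : (X 1^(K1+K2+1+La+Lb+(m'+1)) * R3 - U * GZ (m'+1) - V * (X 2 * GZ m'))
        ∈ RingHom.ker (MvPolynomial.map (Int.castRingHom (ZMod 2))) := by
      rw [RingHom.mem_ker]
      exact hWzero
    rw [MvPolynomial.ker_map, ZMod.ker_intCastRingHom, Ideal.map_span, Set.image_singleton] at h7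
    rwa [show ((C ((2:ℕ):ℤ)) : PZ) = C 2 from by norm_num] at h7
  obtain ⟨W1, hW1⟩ := Ideal.mem_span_singleton'.1 hWmem
  have hC2 : mkA (e3 (C (2:ℤ))) = (2:A) := by
    rw [show (C (2:ℤ) : PZ) = 2 from map_ofNat C 2, map_ofNat e3, map_ofNat mkA]
  have h8 : ε * mkA (e3 (X 1^(K1+K2+1+La+Lb+(m'+1)) * R3 - U * GZ (m'+1) - V * (X 2 * GZ m')))
      = ε * (mkA (e3 W1) * (2:A)) := by
    rw [← hW1, map_mul, map_mul, hC2]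
  have h9 : ε * (mkA (e3 W1) * (2:A)) = 0 := by
    rw [show ε * (mkA (e3 W1) * (2:A)) = (2 * ε) * mkA (e3 W1) from by ring, two_eps, zero_mul]
  have h10 : ε * mkA (e3 (X 1^(K1+K2+1+La+Lb+(m'+1)) * R3 - U * GZ (m'+1) - V * (X 2 * GZ m')))
      = τ^(K1+K2+1+La+Lb+(m'+1)) * (ε * mkA (e3 R3))
        - mkA (e3 U) * f (m'+1) - mkA (e3 V) * (h * f m') := by
    simp only [map_sub, map_mul, map_pow, e3_X1, e3_X2, mkA_X1, mkA_X3]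
    linear_combination (-(mkA (e3 U))) * eps_mul_GZ (m'+1) + (-(mkA (e3 V) * h)) * eps_mul_GZ m'
  have h11 : τ^(K1+K2+1+La+Lb+(m'+1)) * (ε * mkA (e3 R3))
      = mkA (e3 U) * f (m'+1) + mkA (e3 V) * (h * f m') := by
    linear_combination -h10 + h8 + h9
  have hmem : τ^(K1+K2+1+La+Lb+(m'+1)) * (ε * mkA (e3 R3)) ∈ Jm m' := by
    rw [h11]
    exact add_mem (Ideal.mul_mem_left _ _ (gen2_mem m')) (Ideal.mul_mem_left _ _ (hf_mem m'))
  have hfin : ε * mkA (e3 R3)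
      = σ^(K1+K2+1+La+Lb+(m'+1)) * (τ^(K1+K2+1+La+Lb+(m'+1)) * (ε * mkA (e3 R3))) := by
    rw [← mul_assoc, sigma_tau_pow, one_mul]
  rw [hfin]
  exact Ideal.mul_mem_left _ _ hmem

end
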